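/- arXiv:1412.2226 — 2 statements merged into one kernel-verified Lean document; each statement's English description precedes it below -/
import Mathlib

section
/- An allocation M of all items to the agents is the outcome of some policy (an arbitrary sequence of m turns) if and only if M is Pareto optimal. -/
open Finset
open scoped Classical

/-- The most preferred item of a nonempty finset w.r.t. a linear order
(greater means more preferred). -/
noncomputable def favorite {ι : Type} (L : LinearOrder ι) (S : Finset ι) (h : S.Nonempty) : ι :=
  @Finset.max' ι L S h

/-- Sequential allocation: process the turns in order; at each turn the agent whose
turn it is picks her most preferred item among the items not yet allocated.
Returns the list of (agent, item) picks, in order. -/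
noncomputable def seqAlloc {n : ℕ} {ι : Type} [DecidableEq ι]
    (P : Fin n → LinearOrder ι) : List (Fin n) → Finset ι → List (Fin n × ι)
  | [], _ => []
  | a :: rest, S =>
    if h : S.Nonempty then
      (a, favorite (P a) S h) :: seqAlloc P rest (S.erase (favorite (P a) S h))
    else []

/-- `M` is the outcome of the policy `π`: every item is picked by the agent that
`M` assigns it to. -/
def IsOutcome {n : ℕ} {ι : Type} [Fintype ι] [DecidableEq ι]
    (P : Fin n → LinearOrder ι) (π : List (Fin n)) (M : ι → Fin n) : Prop :=
  ∀ o : ι, (M o, o) ∈ seqAlloc P π Finset.univ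

/-- The set of items that agent `a` picks under the policy `π`. -/
noncomputable def receives {n : ℕ} {ι : Type} [Fintype ι] [DecidableEq ι]
    (P : Fin n → LinearOrder ι) (π : List (Fin n)) (a : Fin n) : Finset ι :=
  Finset.univ.filter (fun o => (a, o) ∈ seqAlloc P π Finset.univ)

/-- An allocation `M` is Pareto optimal if there is no bijection `f` of the items such
that every agent weakly prefers `f o` to `o` for each item `o` she gets, with at least
one strict preference. -/
def ParetoOptimal {n : ℕ} {ι : Type} (P : Fin n → LinearOrder ι) (M : ι → Fin n) : Prop :=
  ¬ ∃ f : ι ≃ ι, (∀ o : ι, (P (M o)).le o (f o)) ∧ (∃ o : ι, (P (M o)).lt o (f o))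

/-- A policy is balanced if every agent has exactly `k` turns. -/
def BalancedPolicy {n : ℕ} (k : ℕ) (π : List (Fin n)) : Prop :=
  ∀ a : Fin n, π.count a = k

/-- An allocation is balanced if every agent receives exactly `k` items. -/
def BalancedAlloc {n : ℕ} {ι : Type} [Fintype ι] (k : ℕ) (M : ι → Fin n) : Prop :=
  ∀ a : Fin n, (Finset.univ.filter (fun o => M o = a)).card = k

/-- A policy is recursively balanced if it splits into `k` consecutive rounds of `n`
turns each, every agent having exactly one turn in each round. -/
def RecBalanced (n k : ℕ) (π : List (Fin n)) : Prop :=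
  ∃ rounds : List (List (Fin n)), rounds.length = k ∧
    (∀ r ∈ rounds, r.length = n ∧ ∀ a : Fin n, r.count a = 1) ∧
    π = rounds.flatten

/-- A strict alternation policy: every one of the `k` rounds uses the same order `σ`
over the agents. -/
def StrictAlt (n k : ℕ) (π : List (Fin n)) : Prop :=
  ∃ σ : List (Fin n), σ.length = n ∧ (∀ a : Fin n, σ.count a = 1) ∧
    π = (List.replicate k σ).flatten

/-- A balanced alternation policy: odd-numbered rounds use the order `σ` over the agents
and even-numbered rounds use its reverse. -/
def BalAlt (n k : ℕ) (π : List (Fin n)) : Prop :=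
  ∃ σ : List (Fin n), σ.length = n ∧ (∀ a : Fin n, σ.count a = 1) ∧
    π = ((List.range k).map (fun r => if r % 2 = 0 then σ else σ.reverse)).flatten

/-- `p j i` (for `1 ≤ i ≤ k`) is the item ranked `i`-th by agent `j` among the items `M`
allocates to `j`: it is allocated to `j`, and exactly `i - 1` of the items allocated
to `j` are strictly preferred to it by agent `j`. -/
def IsRankingOf {n : ℕ} {ι : Type} [Fintype ι] (P : Fin n → LinearOrder ι) (k : ℕ)
    (M : ι → Fin n) (p : Fin n → ℕ → ι) : Prop :=
  ∀ (j : Fin n) (i : ℕ), 1 ≤ i → i ≤ k →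
    M (p j i) = j ∧
    (Finset.univ.filter (fun o => M o = j ∧ (P j).lt (p j i) o)).card = i - 1

/-- Condition 3: for all `1 ≤ t < s ≤ k` and all agents `j, j'`, agent `j` strictly
prefers `p j t` to `p j' s`. -/
def Cond3 {n : ℕ} {ι : Type} (P : Fin n → LinearOrder ι) (k : ℕ) (p : Fin n → ℕ → ι) : Prop :=
  ∀ t s : ℕ, 1 ≤ t → t < s → s ≤ k → ∀ j j' : Fin n, (P j).lt (p j' s) (p j t)

/-- The edge relation of the directed graph `G_M`: for odd `i ≤ k` an edge `a → b`
whenever `b` strictly prefers `p a i` to `p b i`, and for even `i ≤ k` an edge `a → b`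
whenever `a` strictly prefers `p b i` to `p a i`. -/
def GM {n : ℕ} {ι : Type} (P : Fin n → LinearOrder ι) (k : ℕ) (p : Fin n → ℕ → ι)
    (a b : Fin n) : Prop :=
  (∃ i : ℕ, 1 ≤ i ∧ i ≤ k ∧ i % 2 = 1 ∧ (P b).lt (p b i) (p a i)) ∨
  (∃ i : ℕ, 1 ≤ i ∧ i ≤ k ∧ i % 2 = 0 ∧ (P a).lt (p a i) (p b i))

/-- The edge relation of the directed graph `H_M`: for each `i ≤ k` an edge `a → b`
whenever `b` strictly prefers `p a i` to `p b i`. -/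
def HM {n : ℕ} {ι : Type} (P : Fin n → LinearOrder ι) (k : ℕ) (p : Fin n → ℕ → ι)
    (a b : Fin n) : Prop :=
  ∃ i : ℕ, 1 ≤ i ∧ i ≤ k ∧ (P b).lt (p b i) (p a i)

/-- The `k` most preferred items of agent `j`: those items with fewer than `k` items
strictly preferred to them by `j`. -/
noncomputable def topItems {n : ℕ} {ι : Type} [Fintype ι] (P : Fin n → LinearOrder ι)
    (k : ℕ) (j : Fin n) : Finset ι :=
  Finset.univ.filter (fun o => (Finset.univ.filter (fun o' => (P j).lt o o')).card < k)

/-- The rank of item `o` in agent `j`'s preference (the most preferred item has rank 1). -/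
noncomputable def rankOf {n : ℕ} {ι : Type} [Fintype ι] (P : Fin n → LinearOrder ι)
    (j : Fin n) (o : ι) : ℕ :=
  (Finset.univ.filter (fun o' => (P j).lt o o')).card + 1

/-
A policy can never yield a Pareto-dominated allocation: each turn's picker takes her favourite
remaining item, so a weak improvement, being a bijection of the remaining items, must fix that
item; inductively it fixes every item. Conversely, if `M` is Pareto optimal, then among any
nonempty set `S` of remaining items some item is the favourite in `S` of its owner under `M`,
and letting that owner pick first and recursing yields a policy. Otherwise sending each item
of `S` to its owner's favourite in `S` strictly improves everyone holding an item of `S`, and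
rotating items along a cycle of this map is a Pareto improvement.
-/

open Function Set in
theorem Function.exists_iterate_mem_periodicPts {α : Type*} [Finite α] (f : α → α) (x : α) :
    ∃ i, f^[i] x ∈ periodicPts f := by
  obtain ⟨i, j, hne, heq⟩ := Finite.exists_ne_map_eq_of_infinite (f^[·] x)
  wlog hij : i < j generalizing i j
  · exact this j i hne.symm heq.symm (by omega)
  refine ⟨i, mk_mem_periodicPts (n := j - i) (by omega) ?_⟩
  rw [IsPeriodicPt, IsFixedPt, ← iterate_add_apply, Nat.sub_add_cancel hij.le]
  exact heq.symm

open Function Set in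
theorem exists_perm_along_of_mapsTo {α : Type*} [Finite α] {T : α → α} {S : Set α}
    (hT : MapsTo T S S) (hS : S.Nonempty) :
    ∃ g : Equiv.Perm α, (∀ x, g x = x ∨ g x = T x) ∧ ∃ x ∈ S, g x = T x := by
  let g := Equiv.Perm.ofSubtype ((bijOn_periodicPts T).equiv T)
  have hg : ∀ x ∈ periodicPts T, g x = T x := fun x hx =>
    Equiv.Perm.ofSubtype_apply_of_mem _ hx
  refine ⟨g, fun x => ?_, ?_⟩
  · by_cases hx : x ∈ periodicPts T
    · exact Or.inr (hg x hx)
    · exact Or.inl (Equiv.Perm.ofSubtype_apply_of_not_mem _ hx)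
  · obtain ⟨x, hx⟩ := hS
    obtain ⟨i, hi⟩ := exists_iterate_mem_periodicPts T x
    exact ⟨T^[i] x, hT.iterate i hx, hg _ hi⟩

section SequentialAllocation

variable {n : ℕ} {ι : Type} (P : Fin n → LinearOrder ι)

theorem favorite_mem (a : Fin n) {S : Finset ι} (hS : S.Nonempty) : favorite (P a) S hS ∈ S :=
  @Finset.max'_mem ι (P a) S hS

theorem le_favorite (a : Fin n) {S : Finset ι} (hS : S.Nonempty) {o : ι} (ho : o ∈ S) :
    (P a).le o (favorite (P a) S hS) :=
  @Finset.le_max' ι (P a) S o ho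

variable [DecidableEq ι]

theorem seqAlloc_cons_of_nonempty (a : Fin n) (π : List (Fin n)) {S : Finset ι}
    (hS : S.Nonempty) :
    seqAlloc P (a :: π) S =
      (a, favorite (P a) S hS) :: seqAlloc P π (S.erase (favorite (P a) S hS)) := by
  rw [seqAlloc, dif_pos hS]

theorem mem_of_mem_seqAlloc {π : List (Fin n)} {S : Finset ι} {a : Fin n} {o : ι}
    (h : (a, o) ∈ seqAlloc P π S) : o ∈ S := by
  induction π generalizing S with
  | nil => simp [seqAlloc] at h
  | cons b π ih =>
    by_cases hS : S.Nonempty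
    · rw [seqAlloc_cons_of_nonempty P b π hS, List.mem_cons] at h
      rcases h with h | h
      · obtain ⟨-, rfl⟩ := Prod.mk.inj h
        exact favorite_mem P b hS
      · exact Finset.mem_of_mem_erase (ih h)
    · simp [seqAlloc, hS] at h

variable {P}

theorem eq_of_forall_le_of_forall_mem_seqAlloc {M : ι → Fin n} {f : Equiv.Perm ι}
    (hle : ∀ o, (P (M o)).le o (f o)) (π : List (Fin n)) {S : Finset ι}
    (hfS : ∀ o ∈ S, f o ∈ S) (hM : ∀ o ∈ S, (M o, o) ∈ seqAlloc P π S) :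
    ∀ o ∈ S, f o = o := by
  induction π generalizing S with
  | nil => exact fun o ho => absurd (hM o ho) (by simp [seqAlloc])
  | cons a π ih =>
    intro o ho
    have hS : S.Nonempty := ⟨o, ho⟩
    set v := favorite (P a) S hS
    have hv : v ∈ S := favorite_mem P a hS
    have hseq := seqAlloc_cons_of_nonempty P a π hS
    have hMv : M v = a := by
      have h := hM v hv
      rw [hseq, List.mem_cons] at h
      rcases h with h | h
      · exact (Prod.ext_iff.mp h).1
      · exact absurd (mem_of_mem_seqAlloc P h) (Finset.notMem_erase v S)
    have hfv : f v = v :=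
      @le_antisymm ι (P a).toPartialOrder _ _ (le_favorite P a hS (hfS v hv)) (hMv ▸ hle v)
    by_cases hov : o = v
    · exact hov ▸ hfv
    refine ih (fun o' ho' => ?_) (fun o' ho' => ?_) o (Finset.mem_erase.mpr ⟨hov, ho⟩)
    · obtain ⟨hne, ho'S⟩ := Finset.mem_erase.mp ho'
      exact Finset.mem_erase.mpr ⟨fun h => hne (f.injective (h.trans hfv.symm)), hfS o' ho'S⟩
    · obtain ⟨hne, ho'S⟩ := Finset.mem_erase.mp ho'
      have h := hM o' ho'S
      rw [hseq, List.mem_cons] at h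
      exact h.resolve_left fun h' => hne (Prod.ext_iff.mp h').2

variable [Fintype ι] {M : ι → Fin n}

theorem ParetoOptimal.exists_favorite_eq_self (hpo : ParetoOptimal P M) {S : Finset ι}
    (hS : S.Nonempty) : ∃ o ∈ S, favorite (P (M o)) S hS = o := by
  by_contra! hne
  let T : ι → ι := fun o => if o ∈ S then favorite (P (M o)) S hS else o
  have hT : ∀ o, (P (M o)).le o (T o) := fun o => by
    by_cases ho : o ∈ S
    · simpa only [T, if_pos ho] using le_favorite P (M o) hS ho
    · simp only [T, if_neg ho]; exact @le_refl ι (P (M o)).toPreorder o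
  have hmaps : Set.MapsTo T S S := fun o ho => by
    rw [Finset.mem_coe] at ho ⊢
    simpa only [T, if_pos ho] using favorite_mem P (M o) hS
  obtain ⟨g, hg, x, hx, hgx⟩ := exists_perm_along_of_mapsTo hmaps hS
  refine hpo ⟨g, fun o => ?_, x, ?_⟩
  · rcases hg o with h | h
    · rw [h]; exact @le_refl ι (P (M o)).toPreorder o
    · rw [h]; exact hT o
  · have hTx : T x ≠ x := by simpa only [T, if_pos (Finset.mem_coe.mp hx)] using hne x hx
    exact hgx ▸ @lt_of_le_of_ne ι (P (M x)).toPartialOrder _ _ (hT x) hTx.symm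

theorem ParetoOptimal.exists_policy (hpo : ParetoOptimal P M) (S : Finset ι) :
    ∃ π : List (Fin n), π.length = S.card ∧ ∀ o ∈ S, (M o, o) ∈ seqAlloc P π S := by
  induction S using Finset.strongInduction with
  | H S ih =>
    rcases S.eq_empty_or_nonempty with rfl | hS
    · exact ⟨[], rfl, by simp⟩
    obtain ⟨o₀, ho₀, hfav⟩ := hpo.exists_favorite_eq_self hS
    obtain ⟨π, hlen, hπ⟩ := ih (S.erase o₀) (Finset.erase_ssubset ho₀)
    refine ⟨M o₀ :: π, by simp [hlen, Finset.card_erase_add_one ho₀], fun o ho => ?_⟩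
    rw [seqAlloc_cons_of_nonempty P _ π hS, hfav, List.mem_cons]
    by_cases h : o = o₀
    · exact Or.inl (h ▸ rfl)
    · exact Or.inr (hπ o (Finset.mem_erase.mpr ⟨h, ho⟩))

end SequentialAllocation

theorem possible_assignment_arbitrary_general
    {ι : Type} [Fintype ι] [DecidableEq ι] {n k : ℕ}
    (hcard : Fintype.card ι = k * n)
    (P : Fin n → LinearOrder ι) (M : ι → Fin n) :
    (∃ π : List (Fin n), π.length = k * n ∧ IsOutcome P π M) ↔ ParetoOptimal P M := by
  constructor
  · rintro ⟨π, -, hout⟩ ⟨f, hle, o, hlt⟩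
    have hfo : f o = o := eq_of_forall_le_of_forall_mem_seqAlloc hle π
      (fun o _ => Finset.mem_univ (f o)) (fun o _ => hout o) o (Finset.mem_univ o)
    rw [hfo] at hlt
    exact @lt_irrefl ι (P (M o)).toPreorder o hlt
  · intro hpo
    obtain ⟨π, hlen, hπ⟩ := hpo.exists_policy Finset.univ
    exact ⟨π, hlen.trans (Finset.card_univ.trans hcard), fun o => hπ o (Finset.mem_univ o)⟩

/-- An allocation `M` of all items to the agents is the outcome of some
policy (an arbitrary sequence of `m = k * n` turns) if and only if `M` is Pareto optimal. -/
theorem possible_assignment_arbitrary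
    {ι : Type} [Fintype ι] [DecidableEq ι] {n k : ℕ} (hn : 0 < n) (hk : 1 ≤ k)
    (hcard : Fintype.card ι = k * n)
    (P : Fin n → LinearOrder ι) (M : ι → Fin n) :
    (∃ π : List (Fin n), π.length = k * n ∧ IsOutcome P π M) ↔ ParetoOptimal P M :=
  possible_assignment_arbitrary_general hcard P M
end

section
/- An allocation M is the outcome of some balanced alternation policy if and only if M is Pareto optimal, M is balanced, M satisfies Condition 3, and the directed graph G_M contains no cycle. -/
open Finset
open scoped Classical

/-!
Sequential allocation is greedy: each pick is, for the agent making it, strictly better than every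
item picked after it; conversely a list of picks with this property, whose agents follow the policy
and whose items are exactly the available ones, is the outcome. Given a balanced alternation order
`σ` and the ranking `p` of a balanced allocation, list in round `r` each agent with her `r`-th best
item, in the order of that round. Under the policy every agent's picks come out in decreasing
preference, so an outcome of the policy is this list. The list is greedy exactly when Condition 3
holds (picks of different rounds) and `σ` lists every edge of `G_M` forward (picks of one round: odd
rounds run along `σ`, even ones against it), and a finite digraph has such an order iff it is
acyclic. Pareto optimality holds for every outcome: an improving bijection must fix the first pick,
then the second, and so on.
-/

namespace List

theorem eq_of_map_fst_eq_of_forall_filter_eq {α β : Type*} [DecidableEq α] :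
    ∀ {l₁ l₂ : List (α × β)}, l₁.map Prod.fst = l₂.map Prod.fst →
      (∀ a, l₁.filter (·.1 = a) = l₂.filter (·.1 = a)) → l₁ = l₂
  | [], [], _, _ => rfl
  | x :: l₁, y :: l₂, hfst, hfilter => by
    simp only [map_cons, cons.injEq] at hfst
    have hxy : x = y := by
      have h := hfilter y.1
      simp only [filter_cons, hfst.1, decide_true, if_true, cons.injEq] at h
      exact h.1
    subst hxy
    refine congrArg (x :: ·) (eq_of_map_fst_eq_of_forall_filter_eq hfst.2 fun a => ?_)
    have h := hfilter a
    simp only [filter_cons] at h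
    split_ifs at h
    · exact (cons.inj h).2
    · exact h

theorem pairwise_range_iff {R : ℕ → ℕ → Prop} {k : ℕ} :
    (range k).Pairwise R ↔ ∀ r r', r < r' → r' < k → R r r' := by
  simp only [pairwise_iff_getElem, length_range, getElem_range]
  exact ⟨fun h r r' hr hr' => h r r' (by omega) hr' hr, fun h r r' _ hr' hr => h r r' hr hr'⟩

end List

section TopologicalOrder

variable {α : Type*} {R : α → α → Prop}

theorem not_transGen_self_of_pairwise {σ : List α} (hmem : ∀ a, a ∈ σ) (hirr : ∀ a, ¬ R a a)
    (hσ : σ.Pairwise fun a b => ¬ R b a) (a : α) : ¬ Relation.TransGen R a a := by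
  classical
  have hidx : ∀ a b, R a b → σ.idxOf a < σ.idxOf b := by
    intro a b hab
    rcases lt_trichotomy (σ.idxOf a) (σ.idxOf b) with h | h | h
    · exact h
    · exact absurd ((List.idxOf_inj (hmem a)).1 h ▸ hab) (hirr b)
    · have := List.pairwise_iff_getElem.1 hσ _ _ (List.idxOf_lt_length_iff.2 (hmem b))
        (List.idxOf_lt_length_iff.2 (hmem a)) h
      simp only [List.getElem_idxOf] at this
      exact absurd hab this
  intro hcycle
  have := Relation.TransGen.lift (p := (· < ·)) _ hidx _ _ hcycle
  rw [Relation.transGen_eq_self] at this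
  exact lt_irrefl _ this

theorem exists_pairwise_not_of_acyclic [Fintype α] (hR : ∀ a, ¬ Relation.TransGen R a a) :
    ∃ σ : List α, σ.Nodup ∧ (∀ a, a ∈ σ) ∧ σ.Pairwise fun a b => ¬ R b a := by
  classical
  have : IsPartialOrder α (Relation.ReflTransGen R) :=
    { refl := fun _ => .refl
      trans := fun _ _ _ => .trans
      antisymm := fun a b hab hba => by
        rcases Relation.reflTransGen_iff_eq_or_transGen.1 hab with h | h
        · exact h.symm
        · exact absurd (h.trans_left hba) (hR a) }
  obtain ⟨s, hs, hext⟩ := extend_partialOrder (Relation.ReflTransGen R)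
  refine ⟨Finset.univ.sort s, Finset.sort_nodup _ _, fun a => by simp, ?_⟩
  refine (Finset.univ.pairwise_sort s).and (Finset.sort_nodup _ _) |>.imp fun ⟨hab, hne⟩ hba => ?_
  exact hne (antisymm hab (hext _ _ (.single hba)))

end TopologicalOrder

section Rank

variable {α : Type*} [LinearOrder α]

theorem card_filter_lt_lt_of_lt {s : Finset α} {x y : α} (hy : y ∈ s) (hxy : x < y) :
    (s.filter (y < ·)).card < (s.filter (x < ·)).card := by
  refine Finset.card_lt_card ⟨fun o ho => ?_, fun hsub => ?_⟩
  · simp only [Finset.mem_filter] at ho ⊢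
    exact ⟨ho.1, hxy.trans ho.2⟩
  · exact lt_irrefl y (Finset.mem_filter.1 (hsub (Finset.mem_filter.2 ⟨hy, hxy⟩))).2

theorem card_filter_lt_getElem {s : Finset α} {l : List α} (hl : l.Pairwise (· > ·))
    (hs : ∀ x, x ∈ l ↔ x ∈ s) {m : ℕ} (hm : m < l.length) :
    (s.filter (l[m] < ·)).card = m := by
  have hfilter : s.filter (l[m] < ·) = (l.take m).toFinset := by
    ext x
    simp only [Finset.mem_filter, ← hs, List.mem_toFinset]
    rw [List.mem_take_iff_getElem, List.mem_iff_getElem]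
    constructor
    · rintro ⟨⟨i, hi, rfl⟩, hlt⟩
      have him : i < m := by
        by_contra! h
        rcases h.lt_or_eq with h | rfl
        · exact lt_asymm hlt (List.pairwise_iff_getElem.1 hl m i hm hi h)
        · exact lt_irrefl _ hlt
      exact ⟨i, by omega, rfl⟩
    · rintro ⟨i, hi, rfl⟩
      have him : i < m := by omega
      exact ⟨⟨i, by omega, rfl⟩, List.pairwise_iff_getElem.1 hl i m _ hm him⟩
  rw [hfilter, List.toFinset_card_of_nodup (hl.nodup.sublist (List.take_sublist _ _)),
    List.length_take]
  omega

end Rank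

section Ranking

variable {ι : Type} [Fintype ι] {n k : ℕ} {P : Fin n → LinearOrder ι} {M : ι → Fin n}
  {p : Fin n → ℕ → ι}

theorem IsRankingOf.eq_of_apply_eq (hp : IsRankingOf P k M p) {i : ℕ} (hi : 1 ≤ i) (hik : i ≤ k)
    {a b : Fin n} (h : p a i = p b i) : a = b := by
  rw [← (hp a i hi hik).1, h, (hp b i hi hik).1]

theorem IsRankingOf.apply_lt_apply (hp : IsRankingOf P k M p) (j : Fin n) {t s : ℕ} (ht : 1 ≤ t)
    (hts : t < s) (hs : s ≤ k) : (P j).lt (p j s) (p j t) := by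
  let := P j
  obtain ⟨-, hcard_t⟩ := hp j t ht (by omega)
  obtain ⟨hMs, hcard_s⟩ := hp j s (by omega) hs
  replace hcard_t : ((Finset.univ.filter (M · = j)).filter (p j t < ·)).card = t - 1 := by
    rwa [Finset.filter_filter]
  replace hcard_s : ((Finset.univ.filter (M · = j)).filter (p j s < ·)).card = s - 1 := by
    rwa [Finset.filter_filter]
  rcases lt_trichotomy (p j s) (p j t) with h | h | h
  · exact h
  · rw [h] at hcard_s
    omega
  · have := card_filter_lt_lt_of_lt (s := Finset.univ.filter (M · = j))
      (Finset.mem_filter.2 ⟨Finset.mem_univ _, hMs⟩) h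
    omega

theorem IsRankingOf.exists_eq (hp : IsRankingOf P k M p) (hbal : BalancedAlloc k M) (o : ι) :
    ∃ r < k, p (M o) (r + 1) = o := by
  set j := M o
  let := P j
  have hsub : (Finset.range k).image (fun r => p j (r + 1)) ⊆ Finset.univ.filter (M · = j) := by
    intro x hx
    obtain ⟨r, hr, rfl⟩ := Finset.mem_image.1 hx
    simp [(hp j (r + 1) (by omega) (by simp at hr; omega)).1]
  have hinj : Set.InjOn (fun r => p j (r + 1)) (Finset.range k) := by
    intro r hr r' hr' heq
    simp only [Finset.coe_range, Set.mem_Iio] at hr hr' heq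
    by_contra hne
    rcases Nat.lt_or_gt_of_ne hne with h | h
    · have := hp.apply_lt_apply j (t := r + 1) (s := r' + 1) (by omega) (by omega) (by omega)
      exact lt_irrefl _ (heq ▸ this)
    · have := hp.apply_lt_apply j (t := r' + 1) (s := r + 1) (by omega) (by omega) (by omega)
      exact lt_irrefl _ (heq ▸ this)
  have himage := Finset.eq_of_subset_of_card_le hsub
    (by rw [Finset.card_image_of_injOn hinj, Finset.card_range, hbal j])
  have ho : o ∈ Finset.univ.filter (M · = j) := by simp [j]
  rw [← himage] at ho
  simpa using ho

theorem exists_isRankingOf [Nonempty ι] (hbal : BalancedAlloc k M) :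
    ∃ p : Fin n → ℕ → ι, IsRankingOf P k M p := by
  have hsorted (j : Fin n) : ∃ l : List ι, l.Pairwise (fun a b => (P j).lt b a) ∧
      (∀ x, x ∈ l ↔ x ∈ Finset.univ.filter (M · = j)) ∧ l.length = k := by
    let := P j
    exact ⟨_, (Finset.sortedGT_sort _).pairwise, fun _ => Finset.mem_sort _,
      by rw [Finset.length_sort, hbal]⟩
  choose l hl hls hlen using hsorted
  refine ⟨fun j i => (l j).getD (i - 1) (Classical.arbitrary ι), fun j i hi hik => ?_⟩
  let := P j
  have hm : i - 1 < (l j).length := by rw [hlen]; omega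
  simp only [List.getD_eq_getElem _ _ hm]
  refine ⟨(Finset.mem_filter.1 ((hls j _).1 (List.getElem_mem hm))).2, ?_⟩
  rw [← Finset.filter_filter]
  exact card_filter_lt_getElem (hl j) (hls j) hm

end Ranking

section SequentialAllocation

variable {ι : Type} {n : ℕ}

def PrefersOwn (P : Fin n → LinearOrder ι) (x y : Fin n × ι) : Prop := (P x.1).lt y.2 x.2

variable {P : Fin n → LinearOrder ι}

theorem PrefersOwn.snd_ne {x y : Fin n × ι} (h : PrefersOwn P x y) : y.2 ≠ x.2 :=
  let := P x.1
  ne_of_lt h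

theorem nodup_map_snd_of_pairwise {ℓ : List (Fin n × ι)} (h : ℓ.Pairwise (PrefersOwn P)) :
    (ℓ.map Prod.snd).Nodup :=
  List.pairwise_map.2 <| h.imp fun hxy => hxy.snd_ne.symm

theorem apply_eq_of_pairwise_prefersOwn {f : ι → ι} (hf : Function.Injective f) :
    ∀ {ℓ : List (Fin n × ι)}, ℓ.Pairwise (PrefersOwn P) → (∀ x ∈ ℓ, (P x.1).le x.2 (f x.2)) →
      (∀ x ∈ ℓ, f x.2 ∈ ℓ.map Prod.snd) → ∀ x ∈ ℓ, f x.2 = x.2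
  | [], _, _, _ => by simp
  | x :: ℓ, hpw, hle, hmem => by
    rw [List.pairwise_cons] at hpw
    have hx : f x.2 = x.2 := by
      rcases List.mem_cons.1 (hmem x List.mem_cons_self) with h | h
      · exact h
      · obtain ⟨y, hy, hfy⟩ := List.mem_map.1 h
        let := P x.1
        exact absurd (hle x List.mem_cons_self) (not_le_of_gt (hfy ▸ hpw.1 y hy))
    rintro y (_ | ⟨_, hy⟩)
    · exact hx
    refine apply_eq_of_pairwise_prefersOwn hf hpw.2 (fun z hz => hle z (.tail _ hz))
      (fun z hz => ?_) y hy
    rcases List.mem_cons.1 (hmem z (.tail _ hz)) with h | h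
    · exact absurd (hf (h.trans hx.symm)) (hpw.1 z hz).snd_ne
    · exact h

section Favorite

variable (L : LinearOrder ι) {S : Finset ι} (hS : S.Nonempty)

theorem favorite_mem_s3 : favorite L S hS ∈ S := @Finset.max'_mem ι L S hS

theorem le_favorite_s3 {x : ι} (hx : x ∈ S) : L.le x (favorite L S hS) := @Finset.le_max' ι L S x hx

theorem favorite_eq_of_forall_le {o : ι} (ho : o ∈ S) (hle : ∀ x ∈ S, L.le x o) :
    favorite L S hS = o :=
  @le_antisymm ι L.toPartialOrder _ _ (@Finset.max'_le ι L S hS o hle) (le_favorite_s3 L hS ho)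

end Favorite

variable [DecidableEq ι]

theorem snd_mem_of_mem_seqAlloc : ∀ {π : List (Fin n)} {S : Finset ι} {x : Fin n × ι},
    x ∈ seqAlloc P π S → x.2 ∈ S
  | [], _, _, hx => by simp [seqAlloc] at hx
  | a :: π, S, x, hx => by
    rw [seqAlloc] at hx
    split_ifs at hx with hS
    · rcases List.mem_cons.1 hx with rfl | hx
      · exact favorite_mem_s3 _ hS
      · exact Finset.mem_of_mem_erase (snd_mem_of_mem_seqAlloc hx)
    · simp at hx

theorem pairwise_seqAlloc : ∀ (π : List (Fin n)) (S : Finset ι),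
    (seqAlloc P π S).Pairwise (PrefersOwn P)
  | [], _ => by simp [seqAlloc]
  | a :: π, S => by
    rw [seqAlloc]
    split_ifs with hS
    · refine List.pairwise_cons.2 ⟨fun y hy => ?_, pairwise_seqAlloc π _⟩
      let := P a
      obtain ⟨hne, hyS⟩ := Finset.mem_erase.1 (snd_mem_of_mem_seqAlloc hy)
      exact lt_of_le_of_ne (le_favorite_s3 _ hS hyS) hne
    · simp

theorem map_fst_seqAlloc : ∀ (π : List (Fin n)) (S : Finset ι), π.length ≤ S.card →
    (seqAlloc P π S).map Prod.fst = π
  | [], _, _ => by simp [seqAlloc]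
  | a :: π, S, hlen => by
    have hS : S.Nonempty := Finset.card_pos.1 (by simp at hlen; omega)
    rw [seqAlloc, dif_pos hS, List.map_cons, map_fst_seqAlloc π _ (by
      rw [Finset.card_erase_of_mem (favorite_mem_s3 _ _)]; simp at hlen; omega)]

theorem seqAlloc_eq_of_pairwise : ∀ {ℓ : List (Fin n × ι)} {S : Finset ι},
    (∀ o, o ∈ ℓ.map Prod.snd ↔ o ∈ S) → ℓ.Pairwise (PrefersOwn P) →
      seqAlloc P (ℓ.map Prod.fst) S = ℓ
  | [], S, hS, _ => by
    simp [seqAlloc]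
  | (a, o) :: ℓ, S, hS, hpw => by
    rw [List.pairwise_cons] at hpw
    simp only [List.map_cons, List.mem_cons] at hS ⊢
    have hoS : o ∈ S := (hS o).1 (.inl rfl)
    have hfav : favorite (P a) S ⟨o, hoS⟩ = o := by
      refine favorite_eq_of_forall_le _ _ hoS fun y hy => ?_
      rcases (hS y).2 hy with rfl | hy
      · exact (P a).le_refl y
      · obtain ⟨z, hz, rfl⟩ := List.mem_map.1 hy
        let := P a
        exact le_of_lt (hpw.1 z hz)
    rw [seqAlloc, dif_pos ⟨o, hoS⟩, hfav, seqAlloc_eq_of_pairwise (fun y => ?_) hpw.2]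
    rw [Finset.mem_erase, ← hS y]
    constructor
    · intro hy
      obtain ⟨z, hz, rfl⟩ := List.mem_map.1 hy
      exact ⟨(hpw.1 z hz).snd_ne, .inr hy⟩
    · rintro ⟨hne, rfl | hy⟩
      · exact absurd rfl hne
      · exact hy

end SequentialAllocation

section Outcome

variable {ι : Type} [Fintype ι] [DecidableEq ι] {n k : ℕ} {P : Fin n → LinearOrder ι}
  {π : List (Fin n)} {M : ι → Fin n}

theorem IsOutcome.mem_seqAlloc_iff (h : IsOutcome P π M) {x : Fin n × ι} :
    x ∈ seqAlloc P π Finset.univ ↔ M x.2 = x.1 := by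
  obtain ⟨a, o⟩ := x
  refine ⟨fun hx => ?_, fun (hx : M o = a) => hx ▸ h o⟩
  exact congrArg Prod.fst <| List.inj_on_of_nodup_map
    (nodup_map_snd_of_pairwise (pairwise_seqAlloc π _)) (h o) hx rfl

theorem IsOutcome.paretoOptimal (h : IsOutcome P π M) : ParetoOptimal P M := by
  rintro ⟨f, hle, o, hlt⟩
  have hfix := apply_eq_of_pairwise_prefersOwn f.injective (pairwise_seqAlloc π Finset.univ)
    (fun x hx => h.mem_seqAlloc_iff.1 hx ▸ hle x.2)
    (fun x _ => List.mem_map.2 ⟨_, h (f x.2), rfl⟩) _ (h o)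
  let := P (M o)
  exact lt_irrefl _ (hfix ▸ hlt)

theorem IsOutcome.balancedAlloc (h : IsOutcome P π M) (hlen : π.length ≤ Fintype.card ι)
    (hπ : BalancedPolicy k π) : BalancedAlloc k M := by
  intro j
  set ℓ := (seqAlloc P π Finset.univ).filter (·.1 = j)
  have hnd : (ℓ.map Prod.snd).Nodup :=
    nodup_map_snd_of_pairwise ((pairwise_seqAlloc π _).filter _)
  have hset : Finset.univ.filter (M · = j) = (ℓ.map Prod.snd).toFinset := by
    ext o
    simp [ℓ, h.mem_seqAlloc_iff]
  rw [hset, List.toFinset_card_of_nodup hnd, List.length_map, ← hπ j,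
    ← map_fst_seqAlloc π _ hlen, List.count_eq_countP, List.countP_map,
    List.countP_eq_length_filter]
  rfl

end Outcome

section BalancedAlternation

variable {α : Type*}

-- Rounds are numbered from `0`: round `r` is the informal round `r + 1`, so even `r` follow `σ`.
def roundOrder (σ : List α) (r : ℕ) : List α := if r % 2 = 0 then σ else σ.reverse

def altPolicy (σ : List α) (k : ℕ) : List α := ((List.range k).map (roundOrder σ)).flatten

theorem mem_roundOrder {σ : List α} {r : ℕ} {a : α} : a ∈ roundOrder σ r ↔ a ∈ σ := by
  unfold roundOrder; split_ifs <;> simp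

theorem count_roundOrder [BEq α] (σ : List α) (r : ℕ) (a : α) :
    (roundOrder σ r).count a = σ.count a := by
  unfold roundOrder; split_ifs <;> simp

theorem pairwise_roundOrder_iff {σ : List α} {r : ℕ} {R : α → α → Prop} :
    (roundOrder σ r).Pairwise R ↔ σ.Pairwise fun a b => if r % 2 = 0 then R a b else R b a := by
  unfold roundOrder; split_ifs <;> simp [List.pairwise_reverse]

theorem length_altPolicy (σ : List α) (k : ℕ) : (altPolicy σ k).length = k * σ.length := by
  simp [altPolicy, roundOrder, List.length_flatten, Function.comp_def, apply_ite]

theorem count_altPolicy [BEq α] (σ : List α) (k : ℕ) (a : α) :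
    (altPolicy σ k).count a = k * σ.count a := by
  simp [altPolicy, List.count_flatten, Function.comp_def, count_roundOrder]

end BalancedAlternation

section AltPicks

variable {ι : Type} {n k : ℕ} {P : Fin n → LinearOrder ι} {σ : List (Fin n)}
  {p : Fin n → ℕ → ι}

def altPicks (σ : List (Fin n)) (k : ℕ) (p : Fin n → ℕ → ι) : List (Fin n × ι) :=
  ((List.range k).map fun r => (roundOrder σ r).map fun a => (a, p a (r + 1))).flatten

theorem map_fst_altPicks : (altPicks σ k p).map Prod.fst = altPolicy σ k := by
  simp [altPicks, altPolicy, List.map_flatten, Function.comp_def]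

theorem mem_altPicks {a : Fin n} (ha : a ∈ σ) {r : ℕ} (hr : r < k) :
    (a, p a (r + 1)) ∈ altPicks σ k p := by
  simp only [altPicks, List.mem_flatten, List.mem_map, List.mem_range]
  exact ⟨_, ⟨r, hr, rfl⟩, List.mem_map.2 ⟨a, mem_roundOrder.2 ha, rfl⟩⟩

theorem filter_altPicks {a : Fin n} (ha : σ.count a = 1) :
    (altPicks σ k p).filter (·.1 = a) = (List.range k).map fun r => (a, p a (r + 1)) := by
  have hround (r : ℕ) :
      ((roundOrder σ r).map fun b => (b, p b (r + 1))).filter (·.1 = a) = [(a, p a (r + 1))] := by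
    simp [List.filter_map, Function.comp_def, List.filter_eq, count_roundOrder, ha]
  simp only [altPicks, List.filter_flatten, List.map_map, Function.comp_def, hround]
  exact List.map_eq_flatMap.symm

theorem not_GM_self (a : Fin n) : ¬ GM P k p a a := by
  let := P a
  rintro (⟨i, -, -, -, h⟩ | ⟨i, -, -, -, h⟩) <;> exact lt_irrefl _ h

theorem not_GM_iff {a b : Fin n} (hab : ∀ r < k, p a (r + 1) ≠ p b (r + 1)) :
    ¬ GM P k p b a ↔ ∀ r < k, if r % 2 = 0 then (P a).lt (p b (r + 1)) (p a (r + 1))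
      else (P b).lt (p a (r + 1)) (p b (r + 1)) := by
  simp only [GM, not_or, not_exists, not_and]
  constructor
  · rintro ⟨hodd, heven⟩ r hr
    split_ifs with hpar
    · let := P a
      exact lt_of_le_of_ne (not_lt.1 (hodd (r + 1) (by omega) (by omega) (by omega)))
        (hab r hr).symm
    · let := P b
      exact lt_of_le_of_ne (not_lt.1 (heven (r + 1) (by omega) (by omega) (by omega)))
        (hab r hr)
  · intro h
    constructor
    all_goals
      intro i hi hik hpar hlt
      obtain ⟨r, rfl⟩ : ∃ r, i = r + 1 := ⟨i - 1, by omega⟩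
      have hr := h r (by omega)
    · rw [if_pos (by omega)] at hr
      let := P a
      exact lt_asymm hlt hr
    · rw [if_neg (by omega)] at hr
      let := P b
      exact lt_asymm hlt hr

theorem pairwise_altPicks_iff (hσ : ∀ a, σ.count a = 1)
    (hp : ∀ r < k, ∀ a b, p a (r + 1) = p b (r + 1) → a = b) :
    (altPicks σ k p).Pairwise (PrefersOwn P) ↔
      Cond3 P k p ∧ σ.Pairwise fun a b => ¬ GM P k p b a := by
  have hmem (a : Fin n) : a ∈ σ := List.count_pos_iff.1 (by rw [hσ]; omega)
  have hnd : σ.Nodup := List.nodup_iff_count_le_one.2 fun a => (hσ a).le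
  simp only [altPicks, List.pairwise_flatten, List.mem_range,
    List.pairwise_map, List.pairwise_range_iff, List.mem_map, mem_roundOrder,
    forall_exists_index, and_imp, forall_apply_eq_imp_iff₂, pairwise_roundOrder_iff, PrefersOwn]
  rw [and_comm]
  refine and_congr ⟨fun h t s ht hts hs a b => ?_, fun h r r' hrr' hr' a _ b _ => ?_⟩ ?_
  · obtain ⟨r, rfl⟩ : ∃ r, t = r + 1 := ⟨t - 1, by omega⟩
    obtain ⟨r', rfl⟩ : ∃ r', s = r' + 1 := ⟨s - 1, by omega⟩
    exact h r r' (by omega) (by omega) a (hmem a) b (hmem b)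
  · exact h (r + 1) (r' + 1) (by omega) (by omega) (by omega) a b
  · have hne {i j : ℕ} (hi : i < σ.length) (hj : j < σ.length) (hij : i < j) (r : ℕ)
        (hr : r < k) : p σ[i] (r + 1) ≠ p σ[j] (r + 1) :=
      fun h => (hnd.getElem_inj_iff.1 (hp r hr _ _ h)).not_lt hij
    simp only [List.pairwise_iff_getElem]
    exact ⟨fun h i j hi hj hij => (not_GM_iff (hne hi hj hij)).2 fun r hr => h r hr i j hi hj hij,
      fun h r hr i j hi hj hij => (not_GM_iff (hne hi hj hij)).1 (h i j hi hj hij) r hr⟩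

end AltPicks

section Characterization

variable {ι : Type} [Fintype ι] [DecidableEq ι] {n k : ℕ} {P : Fin n → LinearOrder ι}
  {M : ι → Fin n} {σ : List (Fin n)} {p : Fin n → ℕ → ι}

theorem seqAlloc_altPolicy_eq_altPicks (hσ : ∀ a, σ.count a = 1)
    (hlen : (altPolicy σ k).length ≤ Fintype.card ι) (hout : IsOutcome P (altPolicy σ k) M)
    (hbal : BalancedAlloc k M) (hp : IsRankingOf P k M p) :
    seqAlloc P (altPolicy σ k) Finset.univ = altPicks σ k p := by
  refine List.eq_of_map_fst_eq_of_forall_filter_eq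
    (by rw [map_fst_seqAlloc _ _ hlen, map_fst_altPicks]) fun a => ?_
  rw [filter_altPicks (hσ a)]
  let := P a
  have hnodup {l : List (Fin n × ι)} (h : l.Pairwise fun x y => y.2 < x.2) : l.Nodup :=
    h.imp (S := (· ≠ ·)) fun hxy heq => lt_irrefl _ (heq ▸ hxy)
  have hpw₁ : ((seqAlloc P (altPolicy σ k) Finset.univ).filter (·.1 = a)).Pairwise
      fun x y => y.2 < x.2 :=
    ((pairwise_seqAlloc _ _).filter _).imp_of_mem fun {x _} hx _ hxy => by
      have hxa : x.1 = a := of_decide_eq_true (List.mem_filter.1 hx).2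
      rw [PrefersOwn, hxa] at hxy
      exact hxy
  have hpw₂ : ((List.range k).map fun r => (a, p a (r + 1))).Pairwise fun x y => y.2 < x.2 := by
    rw [List.pairwise_map, List.pairwise_range_iff]
    exact fun r r' hrr' hr' => hp.apply_lt_apply a (by omega) (by omega) (by omega)
  refine List.Perm.eq_of_pairwise (fun x y _ _ hxy hyx => absurd hxy (lt_asymm hyx)) hpw₁ hpw₂
    ((List.perm_ext_iff_of_nodup (hnodup hpw₁) (hnodup hpw₂)).2 fun ⟨b, o⟩ => ?_)
  simp only [List.mem_filter, hout.mem_seqAlloc_iff, decide_eq_true_eq, List.mem_map,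
    List.mem_range, Prod.mk.injEq]
  constructor
  · rintro ⟨rfl, rfl⟩
    obtain ⟨r, hr, hro⟩ := hp.exists_eq hbal o
    exact ⟨r, hr, rfl, hro⟩
  · rintro ⟨r, hr, rfl, rfl⟩
    exact ⟨(hp a (r + 1) (by omega) (by omega)).1, rfl⟩

theorem isOutcome_altPolicy (hσ : ∀ a, σ.count a = 1) (hbal : BalancedAlloc k M)
    (hp : IsRankingOf P k M p) (hpw : (altPicks σ k p).Pairwise (PrefersOwn P)) :
    IsOutcome P (altPolicy σ k) M := by
  have hmem (o : ι) : (M o, o) ∈ altPicks σ k p := by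
    obtain ⟨r, hr, hro⟩ := hp.exists_eq hbal o
    have hM : M o ∈ σ := List.count_pos_iff.1 (by rw [hσ]; omega)
    simpa only [hro] using mem_altPicks (p := p) hM hr
  rw [IsOutcome, ← map_fst_altPicks (p := p),
    seqAlloc_eq_of_pairwise (fun o => iff_of_true (List.mem_map.2 ⟨_, hmem o, rfl⟩)
      (Finset.mem_univ o)) hpw]
  exact hmem

end Characterization

/-- An allocation `M` is the outcome of some balanced alternation policy if
and only if `M` is Pareto optimal, balanced, satisfies Condition 3, and the directed
graph `G_M` contains no cycle. -/
theorem possible_assignment_balanced_alternation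
    {ι : Type} [Fintype ι] [DecidableEq ι] {n k : ℕ} (hn : 0 < n) (hk : 1 ≤ k)
    (hcard : Fintype.card ι = k * n)
    (P : Fin n → LinearOrder ι) (M : ι → Fin n) :
    (∃ π : List (Fin n), BalAlt n k π ∧ IsOutcome P π M) ↔
      ParetoOptimal P M ∧ BalancedAlloc k M ∧
        ∀ p : Fin n → ℕ → ι, IsRankingOf P k M p →
          Cond3 P k p ∧ ∀ a : Fin n, ¬ Relation.TransGen (GM P k p) a a := by
  constructor
  · rintro ⟨π, ⟨σ, hσlen, hσ, rfl⟩, hout⟩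
    change IsOutcome P (altPolicy σ k) M at hout
    have hlen : (altPolicy σ k).length ≤ Fintype.card ι := by rw [length_altPolicy, hσlen, hcard]
    have hbal := hout.balancedAlloc hlen fun a => by rw [count_altPolicy, hσ, mul_one]
    refine ⟨hout.paretoOptimal, hbal, fun p hp => ?_⟩
    have hpw := seqAlloc_altPolicy_eq_altPicks hσ hlen hout hbal hp ▸ pairwise_seqAlloc _ _
    obtain ⟨hC3, htop⟩ := (pairwise_altPicks_iff hσ fun r hr a b =>
      hp.eq_of_apply_eq (by omega) (by omega)).1 hpw
    exact ⟨hC3, not_transGen_self_of_pairwise (fun a => List.count_pos_iff.1 (by rw [hσ]; omega))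
      not_GM_self htop⟩
  · rintro ⟨-, hbal, hall⟩
    have : Nonempty ι := Fintype.card_pos_iff.1 (by rw [hcard]; positivity)
    obtain ⟨p, hp⟩ := exists_isRankingOf hbal
    obtain ⟨hC3, hacyc⟩ := hall p hp
    obtain ⟨σ, hnd, hmem, htop⟩ := exists_pairwise_not_of_acyclic hacyc
    have hσ (a : Fin n) : σ.count a = 1 := List.count_eq_one_of_mem hnd (hmem a)
    refine ⟨altPolicy σ k, ⟨σ, ?_, hσ, rfl⟩, isOutcome_altPolicy hσ hbal hp
      ((pairwise_altPicks_iff hσ fun r hr a b => hp.eq_of_apply_eq (by omega) (by omega)).2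
        ⟨hC3, htop⟩)⟩
    simpa using Fintype.card_congr (hnd.getEquivOfForallMemList σ hmem)
end
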